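/- arXiv:1903.04569 — 4 statements merged into one kernel-verified Lean document; each statement's English description precedes it below -/
import Mathlib

section
/- Let m ≥ 1, 1 ≤ p₁ ≤ … ≤ p_m < ∞, c_k > 0, p₁ > 1, b₁ ≥ 0, and μ ∈ (0,1) with μ b₁ ≤ b_k ≤ b₁/μ for all k. Define Φ'(r) = Σ_{k=1}^m c_k (b_k + r)^{(p_k−2)/2}. Then for every M ≥ 1 and every σ ∈ ℝⁿ with 0 < |σ| ≤ M, one has C₁ (√b₁ + |σ|)^{p₁−2} ≤ Φ'(|σ|²) ≤ C₂ (√b₁ + |σ|)^{p₁−2}, where C₁ = c₁ (1/2)^{|p₁−2|/2} and C₂ = (2/μ)^{|p₁−2|/2} Σ_{k=1}^m c_k (b₁/μ + M²)^{(p_k−p₁)/2}. -/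
/-!
Write `u = √b₁ + |σ|`. Since `u² / 2 ≤ b₁ + |σ|² ≤ u²` and `μ b₁ ≤ b_k ≤ b₁ / μ`, every base
`b_k + |σ|²` lies within the factor `2 / μ` of `u²`, so `(b_k + |σ|²)^((p₁-2)/2)` is comparable
to `u^(p₁-2)` with constant `(2/μ)^(|p₁-2|/2)`, whatever the sign of `p₁ - 2`. The remaining
factor `(b_k + |σ|²)^((p_k-p₁)/2)` has a nonnegative exponent and is bounded using `|σ| ≤ M`.
The lower bound keeps only the term `k = 1`.
-/

open Real Finset

namespace Real

lemma rpow_le_rpow_abs_mul_rpow_of_le_mul {x y C : ℝ} (e : ℝ) (hx : 0 < x) (hy : 0 < y)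
    (hxy : x ≤ C * y) (hyx : y ≤ C * x) : x ^ e ≤ C ^ |e| * y ^ e := by
  have hC : 0 < C := pos_of_mul_pos_left (hx.trans_le hxy) hy.le
  rcases le_or_gt 0 e with he | he
  · calc x ^ e ≤ (C * y) ^ e := rpow_le_rpow hx.le hxy he
      _ = C ^ |e| * y ^ e := by rw [mul_rpow hC.le hy.le, abs_of_nonneg he]
  · calc x ^ e ≤ (y / C) ^ e :=
          rpow_le_rpow_of_nonpos (by positivity) ((div_le_iff₀' hC).2 hyx) he.le
      _ = C ^ |e| * y ^ e := by
          rw [div_rpow hy.le hC.le, abs_of_neg he, rpow_neg hC.le]; field_simp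

lemma sq_rpow_half {u : ℝ} (hu : 0 ≤ u) (a : ℝ) : (u ^ 2) ^ (a / 2) = u ^ a := by
  rw [← rpow_natCast_mul hu]; congr 1; push_cast; ring

end Real

lemma sqrt_add_sq_le_two_mul {b : ℝ} (hb : 0 ≤ b) (s : ℝ) :
    (√b + s) ^ 2 ≤ 2 * (b + s ^ 2) := by
  nlinarith [sq_nonneg (√b - s), sq_sqrt hb]

lemma add_sq_le_sqrt_add_sq {b s : ℝ} (hb : 0 ≤ b) (hs : 0 ≤ s) : b + s ^ 2 ≤ (√b + s) ^ 2 := by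
  nlinarith [sq_sqrt hb, sqrt_nonneg b]

lemma half_rpow_mul_sqrt_add_rpow_le_add_sq_rpow_half {b s : ℝ} (hb : 0 ≤ b) (hs : 0 < s)
    (a : ℝ) :
    (1 / 2 : ℝ) ^ (|a| / 2) * (√b + s) ^ a ≤ (b + s ^ 2) ^ (a / 2) := by
  have hu : 0 < √b + s := by positivity
  have key := rpow_le_rpow_abs_mul_rpow_of_le_mul (a / 2) (by positivity) (by positivity)
    (sqrt_add_sq_le_two_mul hb s) (by nlinarith [add_sq_le_sqrt_add_sq hb hs.le])
  rw [sq_rpow_half hu.le, abs_div, abs_two] at key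
  rw [one_div, inv_rpow zero_le_two, inv_mul_le_iff₀ (by positivity)]
  exact key

lemma add_sq_rpow_half_le_of_mul_le_of_le_div {b b' μ s : ℝ} (hb : 0 ≤ b) (hs : 0 < s)
    (hμ : 0 < μ) (hμ1 : μ ≤ 1) (hb'l : μ * b ≤ b') (hb'u : b' ≤ b / μ) (a : ℝ) :
    (b' + s ^ 2) ^ (a / 2) ≤ (2 / μ) ^ (|a| / 2) * (√b + s) ^ a := by
  have hu : 0 < √b + s := by positivity
  have hbu : b' * μ ≤ b := (le_div_iff₀ hμ).1 hb'u
  have hupper : b' + s ^ 2 ≤ 2 / μ * (√b + s) ^ 2 := by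
    have := add_sq_le_sqrt_add_sq hb hs.le
    rw [div_mul_eq_mul_div, le_div_iff₀ hμ]
    nlinarith
  have hlower : (√b + s) ^ 2 ≤ 2 / μ * (b' + s ^ 2) := by
    have := sqrt_add_sq_le_two_mul hb s
    rw [div_mul_eq_mul_div, le_div_iff₀ hμ]
    nlinarith
  have key := rpow_le_rpow_abs_mul_rpow_of_le_mul (a / 2)
    (by nlinarith [hμ.le]) (by positivity) hupper hlower
  rwa [sq_rpow_half hu.le, abs_div, abs_two] at key

theorem stmt_1_general (n m : ℕ) (hm : 1 ≤ m) (p b c : ℕ → ℝ)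
    (hpmono : ∀ i j, i ≤ j → j < m → p i ≤ p j)
    (hc : ∀ k < m, 0 < c k) (hb1 : 0 ≤ b 0)
    (μ : ℝ) (hμ : μ ∈ Set.Ioo (0 : ℝ) 1)
    (hbk : ∀ k < m, μ * b 0 ≤ b k ∧ b k ≤ b 0 / μ)
    (M : ℝ)
    (σ : EuclideanSpace ℝ (Fin n)) (hσ : σ ≠ 0) (hσM : ‖σ‖ ≤ M) :
    c 0 * (1 / 2 : ℝ) ^ (|p 0 - 2| / 2) * (Real.sqrt (b 0) + ‖σ‖) ^ (p 0 - 2) ≤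
      (∑ k ∈ Finset.range m, c k * (b k + ‖σ‖ ^ 2) ^ ((p k - 2) / 2)) ∧
    (∑ k ∈ Finset.range m, c k * (b k + ‖σ‖ ^ 2) ^ ((p k - 2) / 2)) ≤
      ((2 / μ) ^ (|p 0 - 2| / 2) *
        ∑ k ∈ Finset.range m, c k * (b 0 / μ + M ^ 2) ^ ((p k - p 0) / 2)) *
      (Real.sqrt (b 0) + ‖σ‖) ^ (p 0 - 2) := by
  obtain ⟨hμ0, hμ1⟩ := hμ
  have hs : 0 < ‖σ‖ := norm_pos_iff.2 hσ
  have hbase : ∀ k < m, 0 < b k + ‖σ‖ ^ 2 := fun k hk => by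
    nlinarith [(hbk k hk).1]
  constructor
  · calc c 0 * (1 / 2 : ℝ) ^ (|p 0 - 2| / 2) * (√(b 0) + ‖σ‖) ^ (p 0 - 2)
        ≤ c 0 * (b 0 + ‖σ‖ ^ 2) ^ ((p 0 - 2) / 2) := by
          rw [mul_assoc]
          exact mul_le_mul_of_nonneg_left (half_rpow_mul_sqrt_add_rpow_le_add_sq_rpow_half hb1 hs _)
            (hc 0 hm).le
      _ ≤ _ := single_le_sum (f := fun k => c k * (b k + ‖σ‖ ^ 2) ^ ((p k - 2) / 2))
          (fun k hk => (mul_pos (hc k (mem_range.1 hk))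
            (rpow_pos_of_pos (hbase k (mem_range.1 hk)) _)).le) (mem_range.2 hm)
  · rw [mul_sum, sum_mul]
    refine sum_le_sum fun k hk => ?_
    have hkm := mem_range.1 hk
    have hx := hbase k hkm
    have hsplit : (b k + ‖σ‖ ^ 2) ^ ((p k - 2) / 2) =
        (b k + ‖σ‖ ^ 2) ^ ((p k - p 0) / 2) * (b k + ‖σ‖ ^ 2) ^ ((p 0 - 2) / 2) := by
      rw [← rpow_add hx]; ring_nf
    have hfar : (b k + ‖σ‖ ^ 2) ^ ((p k - p 0) / 2) ≤ (b 0 / μ + M ^ 2) ^ ((p k - p 0) / 2) :=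
      rpow_le_rpow hx.le (add_le_add (hbk k hkm).2 (pow_le_pow_left₀ hs.le hσM 2))
        (by linarith [hpmono 0 k k.zero_le hkm])
    have hnear := add_sq_rpow_half_le_of_mul_le_of_le_div hb1 hs hμ0 hμ1.le
      (hbk k hkm).1 (hbk k hkm).2 (p 0 - 2)
    rw [hsplit]
    calc c k * ((b k + ‖σ‖ ^ 2) ^ ((p k - p 0) / 2) * (b k + ‖σ‖ ^ 2) ^ ((p 0 - 2) / 2))
        ≤ c k * ((b 0 / μ + M ^ 2) ^ ((p k - p 0) / 2) *
            ((2 / μ) ^ (|p 0 - 2| / 2) * (√(b 0) + ‖σ‖) ^ (p 0 - 2))) := by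
          have hck := (hc k hkm).le
          gcongr
      _ = _ := by ring

theorem stmt_1 (n m : ℕ) (hm : 1 ≤ m) (p b c : ℕ → ℝ)
    (hp1 : 1 < p 0) (hpmono : ∀ i j, i ≤ j → j < m → p i ≤ p j)
    (hc : ∀ k < m, 0 < c k) (hb1 : 0 ≤ b 0)
    (μ : ℝ) (hμ : μ ∈ Set.Ioo (0 : ℝ) 1)
    (hbk : ∀ k < m, μ * b 0 ≤ b k ∧ b k ≤ b 0 / μ)
    (M : ℝ) (hM : 1 ≤ M)
    (σ : EuclideanSpace ℝ (Fin n)) (hσ : σ ≠ 0) (hσM : ‖σ‖ ≤ M) :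
    c 0 * (1 / 2 : ℝ) ^ (|p 0 - 2| / 2) * (Real.sqrt (b 0) + ‖σ‖) ^ (p 0 - 2) ≤
      (∑ k ∈ Finset.range m, c k * (b k + ‖σ‖ ^ 2) ^ ((p k - 2) / 2)) ∧
    (∑ k ∈ Finset.range m, c k * (b k + ‖σ‖ ^ 2) ^ ((p k - 2) / 2)) ≤
      ((2 / μ) ^ (|p 0 - 2| / 2) *
        ∑ k ∈ Finset.range m, c k * (b 0 / μ + M ^ 2) ^ ((p k - p 0) / 2)) *
      (Real.sqrt (b 0) + ‖σ‖) ^ (p 0 - 2) :=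
  stmt_1_general n m hm p b c hpmono hc hb1 μ hμ hbk M σ hσ hσM
end

section
/- Let a_{ij}(σ) := 2Φ''(|σ|²) σ_i σ_j + Φ'(|σ|²) δ_{ij} with Φ'(r) = Σ_{k=1}^m c_k (b_k + r)^{(p_k−2)/2}, where 1 < p₁ ≤ … ≤ p_m, c_k > 0, b₁ ≥ 0 and μ b₁ ≤ b_k ≤ b₁/μ for some μ ∈ (0,1). Then for every M ≥ 1, σ ∈ ℝⁿ with 0 < |σ| ≤ M, and ξ ∈ ℝⁿ: C₁ (√b₁ + |σ|)^{p₁−2} |ξ|² ≤ Σ_{i,j} a_{ij}(σ) ξ_i ξ_j ≤ C₂ (√b₁ + |σ|)^{p₁−2} |ξ|², where C₁ = c₁ min{1, p₁−1} (μ/2)^{|p₁−2|/2} and C₂ = (2/μ)^{|p₁−2|/2} (p_m + 1) Σ_k c_k (b₁/μ + M²)^{(p_k−p₁)/2}. -/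
set_option maxHeartbeats 1000000

lemma my_rpow_half (u : ℝ) (hu : 0 ≤ u) (e : ℝ) : u ^ e = (u ^ 2) ^ (e / 2) := by
  rw [← Real.rpow_natCast u 2, ← Real.rpow_mul hu]
  congr 1; ring

lemma my_lb_aux (μ x v : ℝ) (hμ0 : 0 < μ) (hμ1 : μ ≤ 1) (hx : 0 < x) (hv : 0 < v)
    (h1 : v ≤ x) (h2 : x ≤ 2 * v) (q : ℝ) : (μ/2) ^ |q| * x ^ q ≤ v ^ q := by
  rcases le_or_gt 0 q with hq | hq
  · rw [abs_of_nonneg hq, ← Real.mul_rpow (by positivity) hx.le]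
    apply Real.rpow_le_rpow (by positivity) _ hq
    nlinarith
  · rw [abs_of_neg hq]
    calc (μ/2) ^ (-q) * x ^ q ≤ 1 * x ^ q := by
          apply mul_le_mul_of_nonneg_right _ (Real.rpow_nonneg hx.le q)
          exact Real.rpow_le_one (by positivity) (by linarith) (by linarith)
      _ = x ^ q := one_mul _
      _ ≤ v ^ q := Real.rpow_le_rpow_of_nonpos hv h1 hq.le

lemma my_ub_aux (μ x w : ℝ) (hμ0 : 0 < μ) (hx : 0 < x) (hw : 0 < w)
    (h1 : μ * w ≤ x) (h2 : μ * x ≤ 2 * w) (q : ℝ) : w ^ q ≤ (2/μ) ^ |q| * x ^ q := by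
  rcases le_or_gt 0 q with hq | hq
  · rw [abs_of_nonneg hq, ← Real.mul_rpow (by positivity) hx.le]
    apply Real.rpow_le_rpow hw.le _ hq
    rw [div_mul_eq_mul_div, le_div_iff₀ hμ0]; nlinarith
  · rw [abs_of_neg hq]
    have key : w ^ q ≤ (μ/2 * x) ^ q := by
      apply Real.rpow_le_rpow_of_nonpos (by positivity) _ hq.le
      rw [div_mul_eq_mul_div, div_le_iff₀ (by norm_num : (0:ℝ) < 2)]; nlinarith
    have heq : (μ/2 * x) ^ q = (2/μ) ^ (-q) * x ^ q := by
      rw [Real.mul_rpow (by positivity) hx.le, Real.rpow_neg (by positivity)]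
      congr 1
      rw [← Real.inv_rpow (by positivity)]
      norm_num
    linarith [heq ▸ key]

lemma my_quad_lb (P t2 w E w4 C : ℝ) (hP : 1 < P) (ht : t2 ≤ w * E)
    (ht0 : 0 ≤ t2) (hE : 0 ≤ E) (hw4 : 0 ≤ w4) (hC : 0 ≤ C) :
    C * min 1 (P - 1) * (w4 * w) * E ≤ C * (P - 2) * w4 * t2 + C * (w4 * w) * E := by
  rcases le_total 2 P with h | h
  · rw [min_eq_left (by linarith)]
    nlinarith [mul_nonneg (mul_nonneg (mul_nonneg hC (by linarith : (0:ℝ) ≤ P - 2)) hw4) ht0]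
  · rw [min_eq_right (by linarith)]
    nlinarith [mul_le_mul_of_nonneg_left ht (mul_nonneg (mul_nonneg hC (by linarith : (0:ℝ) ≤ 2 - P)) hw4)]

lemma my_quad_ub (P Pm t2 w E w4 C : ℝ) (hP : 1 < P) (hPm : P ≤ Pm) (hw : 0 ≤ w * E)
    (ht : t2 ≤ w * E) (ht0 : 0 ≤ t2) (hw4 : 0 ≤ w4) (hC : 0 ≤ C) :
    C * (P - 2) * w4 * t2 + C * (w4 * w) * E ≤ C * (Pm + 1) * (w4 * w) * E := by
  rcases le_total 2 P with h | h
  · nlinarith [mul_le_mul_of_nonneg_left ht (mul_nonneg (mul_nonneg hC (by linarith : (0:ℝ) ≤ P - 2)) hw4),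
      mul_nonneg (mul_nonneg hC hw4) hw]
  · nlinarith [mul_nonneg (mul_nonneg (mul_nonneg hC (by linarith : (0:ℝ) ≤ 2 - P)) hw4) ht0,
      mul_nonneg (mul_nonneg hC hw4) hw]

lemma my_sum_id (n : ℕ) (A B : ℝ) (σ ξ : EuclideanSpace ℝ (Fin n)) :
    (∑ i : Fin n, ∑ j : Fin n, (2*A*σ i*σ j + B*(if i = j then 1 else 0))*ξ i*ξ j)
    = 2*A*(∑ i, σ i * ξ i)^2 + B*‖ξ‖^2 := by
  have hξ2 : ‖ξ‖^2 = ∑ i, ξ i * ξ i := by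
    rw [← real_inner_self_eq_norm_sq]; simp only [PiLp.inner_apply, RCLike.inner_apply, conj_trivial]
  rw [hξ2]
  have h1 : ∀ i : Fin n, ∑ j : Fin n, (2*A*σ i*σ j + B*(if i = j then 1 else 0))*ξ i*ξ j
      = 2*A*(σ i * ξ i)*(∑ j, σ j * ξ j) + B*(ξ i * ξ i) := by
    intro i
    have : ∀ j : Fin n, (2*A*σ i*σ j + B*(if i = j then 1 else 0))*ξ i*ξ j
        = 2*A*(σ i * ξ i)*(σ j * ξ j) + (if i = j then B*(ξ i*ξ j) else 0) := by
      intro j; split <;> ring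
    rw [Finset.sum_congr rfl (fun j _ => this j), Finset.sum_add_distrib, ← Finset.mul_sum]
    congr 1
    simp
  rw [Finset.sum_congr rfl (fun i _ => h1 i), Finset.sum_add_distrib, ← Finset.sum_mul,
    ← Finset.mul_sum, ← Finset.mul_sum, sq]
  ring

theorem stmt_3 (n m : ℕ) (hm : 1 ≤ m) (p b c : ℕ → ℝ)
    (hp1 : 1 < p 0) (hpmono : ∀ i j, i ≤ j → j < m → p i ≤ p j)
    (hc : ∀ k < m, 0 < c k) (hb1 : 0 ≤ b 0)
    (μ : ℝ) (hμ : μ ∈ Set.Ioo (0 : ℝ) 1)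
    (hbk : ∀ k < m, μ * b 0 ≤ b k ∧ b k ≤ b 0 / μ)
    (M : ℝ) (hM : 1 ≤ M)
    (σ : EuclideanSpace ℝ (Fin n)) (hσ : σ ≠ 0) (hσM : ‖σ‖ ≤ M)
    (ξ : EuclideanSpace ℝ (Fin n)) :
    c 0 * min 1 (p 0 - 1) * (μ / 2) ^ (|p 0 - 2| / 2) *
        (Real.sqrt (b 0) + ‖σ‖) ^ (p 0 - 2) * ‖ξ‖ ^ 2 ≤
      (∑ i : Fin n, ∑ j : Fin n,
        (2 * (∑ k ∈ Finset.range m,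
            c k * (p k - 2) / 2 * (b k + ‖σ‖ ^ 2) ^ ((p k - 4) / 2)) * σ i * σ j +
          (∑ k ∈ Finset.range m, c k * (b k + ‖σ‖ ^ 2) ^ ((p k - 2) / 2)) *
            (if i = j then 1 else 0)) * ξ i * ξ j) ∧
    (∑ i : Fin n, ∑ j : Fin n,
        (2 * (∑ k ∈ Finset.range m,
            c k * (p k - 2) / 2 * (b k + ‖σ‖ ^ 2) ^ ((p k - 4) / 2)) * σ i * σ j +
          (∑ k ∈ Finset.range m, c k * (b k + ‖σ‖ ^ 2) ^ ((p k - 2) / 2)) *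
            (if i = j then 1 else 0)) * ξ i * ξ j) ≤
      (2 / μ) ^ (|p 0 - 2| / 2) * (p (m - 1) + 1) *
        (∑ k ∈ Finset.range m, c k * (b 0 / μ + M ^ 2) ^ ((p k - p 0) / 2)) *
        (Real.sqrt (b 0) + ‖σ‖) ^ (p 0 - 2) * ‖ξ‖ ^ 2 := by
  obtain ⟨hμ0, hμ1⟩ := hμ
  have hμ1' : μ ≤ 1 := hμ1.le
  have hσ0 : 0 < ‖σ‖ := norm_pos_iff.mpr hσ
  set E : ℝ := ‖ξ‖ ^ 2 with hE_def
  have hE : 0 ≤ E := sq_nonneg _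
  set t : ℝ := ∑ i, σ i * ξ i with ht_def
  have ht : t ^ 2 ≤ ‖σ‖ ^ 2 * E := by
    have h := abs_real_inner_le_norm σ ξ
    have hin : (inner ℝ σ ξ : ℝ) = t := by simp [ht_def, PiLp.inner_apply, RCLike.inner_apply, mul_comm]
    rw [hin] at h
    have := pow_le_pow_left₀ (abs_nonneg t) h 2
    rw [sq_abs, mul_pow] at this
    exact this
  have ht0 : (0:ℝ) ≤ t ^ 2 := sq_nonneg _
  set u : ℝ := Real.sqrt (b 0) + ‖σ‖ with hu_def
  have hu : 0 < u := by positivity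
  have hsqb : Real.sqrt (b 0) ^ 2 = b 0 := Real.sq_sqrt hb1
  have hv : 0 < b 0 + ‖σ‖ ^ 2 := by positivity
  have h1 : b 0 + ‖σ‖ ^ 2 ≤ u ^ 2 := by
    rw [hu_def]; nlinarith [Real.sqrt_nonneg (b 0), hσ0.le]
  have h2 : u ^ 2 ≤ 2 * (b 0 + ‖σ‖ ^ 2) := by
    rw [hu_def]; nlinarith [sq_nonneg (Real.sqrt (b 0) - ‖σ‖)]
  have habs : |p 0 - 2| / 2 = |(p 0 - 2) / 2| := by
    rw [abs_div]; norm_num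
  have hue : u ^ (p 0 - 2) = (u ^ 2) ^ ((p 0 - 2) / 2) := my_rpow_half u hu.le _
  -- rewrite the double sum
  rw [my_sum_id]
  rw [← ht_def, ← hE_def]
  set A : ℝ := ∑ k ∈ Finset.range m, c k * (p k - 2) / 2 * (b k + ‖σ‖ ^ 2) ^ ((p k - 4) / 2) with hA
  set B : ℝ := ∑ k ∈ Finset.range m, c k * (b k + ‖σ‖ ^ 2) ^ ((p k - 2) / 2) with hB
  have hQ : 2*A*t^2 + B*E = ∑ k ∈ Finset.range m,
      (c k * (p k - 2) * (b k + ‖σ‖ ^ 2) ^ ((p k - 4) / 2) * t^2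
        + c k * (b k + ‖σ‖ ^ 2) ^ ((p k - 2) / 2) * E) := by
    rw [hA, hB, Finset.mul_sum, Finset.sum_mul, Finset.sum_mul, ← Finset.sum_add_distrib]
    refine Finset.sum_congr rfl fun k _ => ?_; ring
  -- per-k basic facts
  have hfacts : ∀ k < m, 1 < p k ∧ 0 < c k ∧ 0 < b k + ‖σ‖ ^ 2 ∧
      t ^ 2 ≤ (b k + ‖σ‖ ^ 2) * E := by
    intro k hk
    have hpk : 1 < p k := hp1.trans_le (hpmono 0 k (Nat.zero_le _) hk)
    have hck := hc k hk
    have hbk' := hbk k hk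
    have hbknn : 0 ≤ b k := le_trans (by positivity) hbk'.1
    refine ⟨hpk, hck, by positivity, ?_⟩
    calc t ^ 2 ≤ ‖σ‖ ^ 2 * E := ht
      _ ≤ (b k + ‖σ‖ ^ 2) * E := by nlinarith
  have hsplit : ∀ k < m, (b k + ‖σ‖ ^ 2) ^ ((p k - 4) / 2) * (b k + ‖σ‖ ^ 2)
      = (b k + ‖σ‖ ^ 2) ^ ((p k - 2) / 2) := by
    intro k hk
    rw [show (p k - 2)/2 = (p k - 4)/2 + 1 by ring,
      Real.rpow_add (hfacts k hk).2.2.1, Real.rpow_one]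

  constructor
  · -- lower bound
    rw [hQ]
    have hmem0 : 0 ∈ Finset.range m := Finset.mem_range.mpr hm
    obtain ⟨hp0', hc0, hw0, htk0⟩ := hfacts 0 hm
    have hminnn : (0:ℝ) ≤ min 1 (p 0 - 1) := le_min zero_le_one (by linarith)
    have hnn : ∀ k ∈ Finset.range m,
        (0:ℝ) ≤ c k * (p k - 2) * (b k + ‖σ‖ ^ 2) ^ ((p k - 4) / 2) * t^2
          + c k * (b k + ‖σ‖ ^ 2) ^ ((p k - 2) / 2) * E := by
      intro k hk'
      obtain ⟨hpk, hck, hwk, htk⟩ := hfacts k (Finset.mem_range.mp hk')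
      have hw4 : (0:ℝ) ≤ (b k + ‖σ‖ ^ 2) ^ ((p k - 4) / 2) := Real.rpow_nonneg hwk.le _
      have hql := my_quad_lb (p k) (t^2) (b k + ‖σ‖ ^ 2) E
        ((b k + ‖σ‖ ^ 2) ^ ((p k - 4) / 2)) (c k) hpk htk ht0 hE hw4 hck.le
      rw [hsplit k (Finset.mem_range.mp hk')] at hql
      have hlhs : (0:ℝ) ≤ c k * min 1 (p k - 1) *
          (b k + ‖σ‖ ^ 2) ^ ((p k - 2) / 2) * E := by
        have : (0:ℝ) ≤ min 1 (p k - 1) := le_min zero_le_one (by linarith)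
        have hww : (0:ℝ) ≤ (b k + ‖σ‖ ^ 2) ^ ((p k - 2) / 2) :=
          Real.rpow_nonneg hwk.le _
        exact mul_nonneg (mul_nonneg (mul_nonneg hck.le this) hww) hE
      linarith
    have key := my_lb_aux μ (u^2) (b 0 + ‖σ‖^2) hμ0 hμ1' (by positivity) hv h1 h2 ((p 0 - 2)/2)
    have hw40 : (0:ℝ) ≤ (b 0 + ‖σ‖ ^ 2) ^ ((p 0 - 4) / 2) := Real.rpow_nonneg hw0.le _
    have step2 : c 0 * min 1 (p 0 - 1) * ((b 0 + ‖σ‖ ^ 2) ^ ((p 0 - 2) / 2)) * E ≤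
        c 0 * (p 0 - 2) * (b 0 + ‖σ‖ ^ 2) ^ ((p 0 - 4) / 2) * t^2
          + c 0 * (b 0 + ‖σ‖ ^ 2) ^ ((p 0 - 2) / 2) * E := by
      have hql := my_quad_lb (p 0) (t^2) (b 0 + ‖σ‖ ^ 2) E
        ((b 0 + ‖σ‖ ^ 2) ^ ((p 0 - 4) / 2)) (c 0) hp0' htk0 ht0 hE hw40 hc0.le
      rwa [hsplit 0 hm] at hql
    have step1 : c 0 * min 1 (p 0 - 1) * (μ / 2) ^ (|p 0 - 2| / 2) * u ^ (p 0 - 2) * E ≤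
        c 0 * min 1 (p 0 - 1) * ((b 0 + ‖σ‖ ^ 2) ^ ((p 0 - 2) / 2)) * E := by
      rw [habs, hue]
      have h0 : (0:ℝ) ≤ c 0 * min 1 (p 0 - 1) := mul_nonneg hc0.le hminnn
      calc c 0 * min 1 (p 0 - 1) * (μ / 2) ^ |(p 0 - 2) / 2| * (u^2) ^ ((p 0 - 2)/2) * E
          = (c 0 * min 1 (p 0 - 1)) * ((μ / 2) ^ |(p 0 - 2) / 2| * (u^2) ^ ((p 0 - 2)/2)) * E := by
            ring
        _ ≤ (c 0 * min 1 (p 0 - 1)) * ((b 0 + ‖σ‖^2) ^ ((p 0 - 2)/2)) * E :=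
            mul_le_mul_of_nonneg_right (mul_le_mul_of_nonneg_left key h0) hE
        _ = c 0 * min 1 (p 0 - 1) * ((b 0 + ‖σ‖ ^ 2) ^ ((p 0 - 2) / 2)) * E := by ring
    calc c 0 * min 1 (p 0 - 1) * (μ / 2) ^ (|p 0 - 2| / 2) * u ^ (p 0 - 2) * E
        ≤ c 0 * (p 0 - 2) * (b 0 + ‖σ‖ ^ 2) ^ ((p 0 - 4) / 2) * t^2
          + c 0 * (b 0 + ‖σ‖ ^ 2) ^ ((p 0 - 2) / 2) * E :=
          le_trans step1 step2
      _ ≤ _ := Finset.single_le_sum hnn hmem0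
  · -- upper bound
    rw [hQ]
    have hPm : ∀ k < m, p k ≤ p (m - 1) := fun k hk =>
      hpmono k (m - 1) (Nat.le_pred_of_lt hk) (Nat.sub_lt (by omega) one_pos)
    have hXk : (0:ℝ) < b 0 / μ + M ^ 2 := by positivity
    have hσM2 : ‖σ‖ ^ 2 ≤ M ^ 2 := pow_le_pow_left₀ (norm_nonneg σ) hσM 2
    have per : ∀ k ∈ Finset.range m,
        c k * (p k - 2) * (b k + ‖σ‖ ^ 2) ^ ((p k - 4) / 2) * t^2
          + c k * (b k + ‖σ‖ ^ 2) ^ ((p k - 2) / 2) * E ≤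
        (2 / μ) ^ (|p 0 - 2| / 2) * (p (m - 1) + 1) *
          (c k * (b 0 / μ + M ^ 2) ^ ((p k - p 0) / 2)) * u ^ (p 0 - 2) * E := by
      intro k hk'
      have hk := Finset.mem_range.mp hk'
      obtain ⟨hpk, hck, hwk, htk⟩ := hfacts k hk
      have hw4 : (0:ℝ) ≤ (b k + ‖σ‖ ^ 2) ^ ((p k - 4) / 2) := Real.rpow_nonneg hwk.le _
      have hp0k : p 0 ≤ p k := hpmono 0 k (Nat.zero_le _) hk
      have stepA := my_quad_ub (p k) (p (m-1)) (t^2) (b k + ‖σ‖ ^ 2) E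
        ((b k + ‖σ‖ ^ 2) ^ ((p k - 4) / 2)) (c k) hpk (hPm k hk)
        (mul_nonneg hwk.le hE) htk ht0 hw4 hck.le
      rw [hsplit k hk] at stepA
      have f_split : (b k + ‖σ‖ ^ 2) ^ ((p k - 2) / 2)
          = (b k + ‖σ‖ ^ 2) ^ ((p k - p 0) / 2) * (b k + ‖σ‖ ^ 2) ^ ((p 0 - 2) / 2) := by
        rw [← Real.rpow_add hwk]; congr 1; ring
      have hle : b k + ‖σ‖ ^ 2 ≤ b 0 / μ + M ^ 2 := by
        have := (hbk k hk).2; linarith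
      have f1 : (b k + ‖σ‖ ^ 2) ^ ((p k - p 0) / 2)
          ≤ (b 0 / μ + M ^ 2) ^ ((p k - p 0) / 2) :=
        Real.rpow_le_rpow hwk.le hle (by linarith)
      have hμbk : μ * b k ≤ b 0 := by
        have := (hbk k hk).2
        rw [le_div_iff₀ hμ0] at this; linarith
      have hμb0 : μ * b 0 ≤ b k := (hbk k hk).1
      have hh1 : μ * (b k + ‖σ‖ ^ 2) ≤ u ^ 2 := by nlinarith [sq_nonneg ‖σ‖]
      have hh2 : μ * u ^ 2 ≤ 2 * (b k + ‖σ‖ ^ 2) := by nlinarith [sq_nonneg ‖σ‖]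
      have f2 : (b k + ‖σ‖ ^ 2) ^ ((p 0 - 2) / 2)
          ≤ (2 / μ) ^ (|p 0 - 2| / 2) * u ^ (p 0 - 2) := by
        rw [habs, hue]
        exact my_ub_aux μ (u^2) (b k + ‖σ‖ ^ 2) hμ0 (by positivity) hwk hh1 hh2 _
      have f12 : (b k + ‖σ‖ ^ 2) ^ ((p k - p 0) / 2) * (b k + ‖σ‖ ^ 2) ^ ((p 0 - 2) / 2)
          ≤ (b 0 / μ + M ^ 2) ^ ((p k - p 0) / 2) * ((2 / μ) ^ (|p 0 - 2| / 2) * u ^ (p 0 - 2)) :=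
        mul_le_mul f1 f2 (Real.rpow_nonneg hwk.le _)
          ((Real.rpow_nonneg hwk.le _).trans f1)
      have h0 : (0:ℝ) ≤ c k * (p (m - 1) + 1) := by
        have := hPm k hk; exact mul_nonneg hck.le (by linarith)
      calc c k * (p k - 2) * (b k + ‖σ‖ ^ 2) ^ ((p k - 4) / 2) * t^2
            + c k * (b k + ‖σ‖ ^ 2) ^ ((p k - 2) / 2) * E
          ≤ c k * (p (m - 1) + 1) * (b k + ‖σ‖ ^ 2) ^ ((p k - 2) / 2) * E := stepA
        _ = c k * (p (m - 1) + 1) * ((b k + ‖σ‖ ^ 2) ^ ((p k - p 0) / 2)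
              * (b k + ‖σ‖ ^ 2) ^ ((p 0 - 2) / 2)) * E := by rw [f_split]
        _ ≤ c k * (p (m - 1) + 1) * ((b 0 / μ + M ^ 2) ^ ((p k - p 0) / 2)
              * ((2 / μ) ^ (|p 0 - 2| / 2) * u ^ (p 0 - 2))) * E :=
            mul_le_mul_of_nonneg_right (mul_le_mul_of_nonneg_left f12 h0) hE
        _ = (2 / μ) ^ (|p 0 - 2| / 2) * (p (m - 1) + 1) *
              (c k * (b 0 / μ + M ^ 2) ^ ((p k - p 0) / 2)) * u ^ (p 0 - 2) * E := by ring
    calc (∑ k ∈ Finset.range m,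
          (c k * (p k - 2) * (b k + ‖σ‖ ^ 2) ^ ((p k - 4) / 2) * t^2
            + c k * (b k + ‖σ‖ ^ 2) ^ ((p k - 2) / 2) * E))
        ≤ ∑ k ∈ Finset.range m, (2 / μ) ^ (|p 0 - 2| / 2) * (p (m - 1) + 1) *
            (c k * (b 0 / μ + M ^ 2) ^ ((p k - p 0) / 2)) * u ^ (p 0 - 2) * E :=
          Finset.sum_le_sum per
      _ = (2 / μ) ^ (|p 0 - 2| / 2) * (p (m - 1) + 1) *
            (∑ k ∈ Finset.range m, c k * (b 0 / μ + M ^ 2) ^ ((p k - p 0) / 2)) *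
            u ^ (p 0 - 2) * E := by
          rw [Finset.mul_sum, Finset.sum_mul, Finset.sum_mul]
end

section
/- Let Φ'(r) = Σ_{k=1}^m c_k (b_k + r)^{(p_k−2)/2} with 1 ≤ p₁ ≤ … ≤ p_m, c_k > 0, and μ ≤ b_k ≤ 1/μ for all k, where μ ∈ (0,1). Then for every M ≥ 1 and σ ∈ ℝⁿ with 0 < |σ| ≤ M: C₁ (1 + |σ|)^{−1} ≤ Φ'(|σ|²) ≤ C₂ (1 + |σ|)^{−1}, where C₁ = c₁ μ^{p₁/2} and C₂ = √(2/μ) Σ_k c_k (1/μ + M²)^{(p_k−1)/2}. -/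
/-!
Put `x = b + |σ|²`. The two elementary comparisons `√μ · √x ≤ 1 + |σ| ≤ √(2/μ) · √x` turn
`x ^ ((p - 2) / 2) · (1 + |σ|)` into `√x · x ^ ((p - 2) / 2) = x ^ ((p - 1) / 2)` up to constants,
and since `p ≥ 1` the latter is monotone in `x ∈ [μ, 1/μ + M²]`. Each summand is thus squeezed
between multiples of `(1 + |σ|)⁻¹`; the lower bound keeps only the first summand.
-/

open Real

lemma rpow_sub_two_div_two_mul_sqrt {x : ℝ} (hx : 0 < x) (p : ℝ) :
    x ^ ((p - 2) / 2) * √x = x ^ ((p - 1) / 2) := by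
  rw [sqrt_eq_rpow, ← rpow_add hx]
  ring_nf

lemma sqrt_mul_sqrt_add_sq_le_one_add {μ b s : ℝ} (hμ0 : 0 ≤ μ) (hμ1 : μ ≤ 1)
    (hμb : μ * b ≤ 1) (hs : 0 ≤ s) : √μ * √(b + s ^ 2) ≤ 1 + s := by
  rw [← sqrt_mul hμ0, sqrt_le_left (by linarith)]
  nlinarith [mul_le_mul_of_nonneg_right hμ1 (sq_nonneg s)]

lemma one_add_le_sqrt_mul_sqrt_add_sq {μ b s : ℝ} (hμ0 : 0 < μ) (hμ1 : μ ≤ 1) (hμb : μ ≤ b) :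
    1 + s ≤ √(2 / μ) * √(b + s ^ 2) := by
  rw [← sqrt_mul (by positivity), div_mul_eq_mul_div]
  apply le_sqrt_of_sq_le
  rw [le_div_iff₀ hμ0]
  nlinarith [sq_nonneg (1 - s), mul_le_mul_of_nonneg_right hμ1 (sq_nonneg s)]

lemma rpow_mul_inv_one_add_le_rpow_add_sq {μ b s p : ℝ} (hμ0 : 0 < μ) (hμ1 : μ ≤ 1)
    (hμb : μ ≤ b) (hbμ : b ≤ 1 / μ) (hp : 1 ≤ p) (hs : 0 ≤ s) :
    μ ^ (p / 2) * (1 + s)⁻¹ ≤ (b + s ^ 2) ^ ((p - 2) / 2) := by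
  have hx : 0 < b + s ^ 2 := by nlinarith [sq_nonneg s]
  rw [← div_eq_mul_inv, div_le_iff₀ (by positivity)]
  calc μ ^ (p / 2) = √μ * μ ^ ((p - 1) / 2) := by
        rw [sqrt_eq_rpow, ← rpow_add hμ0]
        ring_nf
    _ ≤ √μ * (b + s ^ 2) ^ ((p - 1) / 2) := by
        gcongr
        nlinarith [sq_nonneg s]
    _ = (b + s ^ 2) ^ ((p - 2) / 2) * (√μ * √(b + s ^ 2)) := by
        rw [← rpow_sub_two_div_two_mul_sqrt hx]
        ring
    _ ≤ (b + s ^ 2) ^ ((p - 2) / 2) * (1 + s) := by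
        gcongr
        exact sqrt_mul_sqrt_add_sq_le_one_add hμ0.le hμ1 ((le_div_iff₀' hμ0).1 hbμ) hs

lemma rpow_add_sq_le_sqrt_mul_rpow_mul_inv_one_add {μ b s p M : ℝ} (hμ0 : 0 < μ)
    (hμ1 : μ ≤ 1) (hμb : μ ≤ b) (hbμ : b ≤ 1 / μ) (hp : 1 ≤ p) (hs : 0 ≤ s) (hsM : s ≤ M) :
    (b + s ^ 2) ^ ((p - 2) / 2) ≤ √(2 / μ) * (1 / μ + M ^ 2) ^ ((p - 1) / 2) * (1 + s)⁻¹ := by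
  have hx : 0 < b + s ^ 2 := by nlinarith [sq_nonneg s]
  rw [← div_eq_mul_inv, le_div_iff₀ (by positivity)]
  calc (b + s ^ 2) ^ ((p - 2) / 2) * (1 + s)
      ≤ (b + s ^ 2) ^ ((p - 2) / 2) * (√(2 / μ) * √(b + s ^ 2)) := by
        gcongr
        exact one_add_le_sqrt_mul_sqrt_add_sq hμ0 hμ1 hμb
    _ = √(2 / μ) * (b + s ^ 2) ^ ((p - 1) / 2) := by
        rw [← rpow_sub_two_div_two_mul_sqrt hx]
        ring
    _ ≤ √(2 / μ) * (1 / μ + M ^ 2) ^ ((p - 1) / 2) := by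
        gcongr

theorem stmt_4_general (n m : ℕ) (hm : 1 ≤ m) (p b c : ℕ → ℝ)
    (hp1 : 1 ≤ p 0) (hpmono : ∀ i j, i ≤ j → j < m → p i ≤ p j)
    (hc : ∀ k < m, 0 < c k)
    (μ : ℝ) (hμ : μ ∈ Set.Ioo (0 : ℝ) 1)
    (hbk : ∀ k < m, μ ≤ b k ∧ b k ≤ 1 / μ)
    (M : ℝ)
    (σ : EuclideanSpace ℝ (Fin n)) (hσM : ‖σ‖ ≤ M) :
    c 0 * μ ^ (p 0 / 2) * (1 + ‖σ‖)⁻¹ ≤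
      (∑ k ∈ Finset.range m, c k * (b k + ‖σ‖ ^ 2) ^ ((p k - 2) / 2)) ∧
    (∑ k ∈ Finset.range m, c k * (b k + ‖σ‖ ^ 2) ^ ((p k - 2) / 2)) ≤
      (Real.sqrt (2 / μ) *
        ∑ k ∈ Finset.range m, c k * (1 / μ + M ^ 2) ^ ((p k - 1) / 2)) *
      (1 + ‖σ‖)⁻¹ := by
  obtain ⟨hμ0, hμ1⟩ := hμ
  have hs := norm_nonneg σ
  have hp : ∀ k < m, 1 ≤ p k := fun k hk => hp1.trans (hpmono 0 k k.zero_le hk)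
  constructor
  · calc c 0 * μ ^ (p 0 / 2) * (1 + ‖σ‖)⁻¹
        = c 0 * (μ ^ (p 0 / 2) * (1 + ‖σ‖)⁻¹) := mul_assoc _ _ _
      _ ≤ c 0 * (b 0 + ‖σ‖ ^ 2) ^ ((p 0 - 2) / 2) := by
          have := hc 0 hm
          gcongr
          exact rpow_mul_inv_one_add_le_rpow_add_sq hμ0 hμ1.le (hbk 0 hm).1 (hbk 0 hm).2 hp1 hs
      _ ≤ ∑ k ∈ Finset.range m, c k * (b k + ‖σ‖ ^ 2) ^ ((p k - 2) / 2) := by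
          refine Finset.single_le_sum (f := fun k => c k * (b k + ‖σ‖ ^ 2) ^ ((p k - 2) / 2))
            (fun k hk => ?_) (Finset.mem_range.2 hm)
          have hk := Finset.mem_range.1 hk
          have hbk0 := hμ0.le.trans (hbk k hk).1
          exact mul_nonneg (hc k hk).le (rpow_nonneg (by positivity) _)
  · rw [Finset.mul_sum, Finset.sum_mul]
    refine Finset.sum_le_sum fun k hk => ?_
    have hk := Finset.mem_range.1 hk
    calc c k * (b k + ‖σ‖ ^ 2) ^ ((p k - 2) / 2)
        ≤ c k * (√(2 / μ) * (1 / μ + M ^ 2) ^ ((p k - 1) / 2) * (1 + ‖σ‖)⁻¹) :=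
          mul_le_mul_of_nonneg_left (rpow_add_sq_le_sqrt_mul_rpow_mul_inv_one_add hμ0 hμ1.le
            (hbk k hk).1 (hbk k hk).2 (hp k hk) hs hσM) (hc k hk).le
      _ = _ := by ring

theorem stmt_4 (n m : ℕ) (hm : 1 ≤ m) (p b c : ℕ → ℝ)
    (hp1 : 1 ≤ p 0) (hpmono : ∀ i j, i ≤ j → j < m → p i ≤ p j)
    (hc : ∀ k < m, 0 < c k)
    (μ : ℝ) (hμ : μ ∈ Set.Ioo (0 : ℝ) 1)
    (hbk : ∀ k < m, μ ≤ b k ∧ b k ≤ 1 / μ)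
    (M : ℝ) (hM : 1 ≤ M)
    (σ : EuclideanSpace ℝ (Fin n)) (hσ : σ ≠ 0) (hσM : ‖σ‖ ≤ M) :
    c 0 * μ ^ (p 0 / 2) * (1 + ‖σ‖)⁻¹ ≤
      (∑ k ∈ Finset.range m, c k * (b k + ‖σ‖ ^ 2) ^ ((p k - 2) / 2)) ∧
    (∑ k ∈ Finset.range m, c k * (b k + ‖σ‖ ^ 2) ^ ((p k - 2) / 2)) ≤
      (Real.sqrt (2 / μ) *
        ∑ k ∈ Finset.range m, c k * (1 / μ + M ^ 2) ^ ((p k - 1) / 2)) *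
      (1 + ‖σ‖)⁻¹ :=
  stmt_4_general n m hm p b c hp1 hpmono hc μ hμ hbk M σ hσM
end

section
/- Let a_{ij}(σ) := 2Φ''(|σ|²) σ_i σ_j + Φ'(|σ|²) δ_{ij} with Φ'(r) = Σ_{k=1}^m c_k (b_k + r)^{(p_k−2)/2}, 1 ≤ p₁ ≤ … ≤ p_m, c_k > 0, and μ ≤ b_k ≤ 1/μ for μ ∈ (0,1). Then for every M ≥ 1, σ ∈ ℝⁿ with 0 < |σ| ≤ M, and any ξ' = (ξ, ξ_{n+1}) ∈ ℝⁿ × ℝ with ξ·σ = ξ_{n+1}: C₁ (1 + |σ|)^{−1} |ξ'|² ≤ Σ_{i,j} a_{ij}(σ) ξ_i ξ_j ≤ C₂ (1 + |σ|)^{−1} |ξ'|², where C₁ = c₁ min{1, p₁−1} μ^{p₁/2} / (1+M²) and C₂ = √(2/μ) Σ_k c_k(|p_k−2|+1)(1/μ + M²)^{(p_k−1)/2}. -/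
open Real

lemma term_low (pk b r s X : ℝ) (hp : 1 ≤ pk) (hb : 0 < b) (hr : 0 ≤ r)
    (hX : 0 ≤ X) (hs : s ^ 2 ≤ r * X) :
    min 1 (pk - 1) * ((b + r) ^ ((pk - 2) / 2) * X) ≤
      (pk - 2) * (b + r) ^ ((pk - 4) / 2) * s ^ 2 + (b + r) ^ ((pk - 2) / 2) * X := by
  have ht : 0 < b + r := by linarith
  have key : (b + r) ^ ((pk - 2) / 2) = (b + r) ^ ((pk - 4) / 2) * (b + r) := by
    rw [← Real.rpow_add_one ht.ne']; ring_nf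
  have tp4 : 0 ≤ (b + r) ^ ((pk - 4) / 2) := Real.rpow_nonneg ht.le _
  have inner : min 1 (pk - 1) * ((b + r) * X) ≤ (pk - 2) * s ^ 2 + (b + r) * X := by
    rcases le_total 2 pk with h2 | h2
    · have hle : min 1 (pk - 1) * ((b + r) * X) ≤ 1 * ((b + r) * X) :=
        mul_le_mul_of_nonneg_right (min_le_left _ _) (by positivity)
      have h3 : 0 ≤ (pk - 2) * s ^ 2 := mul_nonneg (by linarith) (sq_nonneg s)
      linarith
    · rw [min_eq_right (by linarith)]
      have h1 : (pk - 2) * (r * X) ≤ (pk - 2) * s ^ 2 := by nlinarith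
      have h3 : 0 ≤ (2 - pk) * b * X := by
        apply mul_nonneg (mul_nonneg (by linarith) hb.le) hX
      nlinarith
  calc min 1 (pk - 1) * ((b + r) ^ ((pk - 2) / 2) * X)
      = (b + r) ^ ((pk - 4) / 2) * (min 1 (pk - 1) * ((b + r) * X)) := by rw [key]; ring
    _ ≤ (b + r) ^ ((pk - 4) / 2) * ((pk - 2) * s ^ 2 + (b + r) * X) :=
        mul_le_mul_of_nonneg_left inner tp4
    _ = (pk - 2) * (b + r) ^ ((pk - 4) / 2) * s ^ 2 + (b + r) ^ ((pk - 2) / 2) * X := by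
        rw [key]; ring

lemma term_up (pk b r s X : ℝ) (hb : 0 < b) (hr : 0 ≤ r) (hX : 0 ≤ X) (hs : s ^ 2 ≤ r * X) :
    (pk - 2) * (b + r) ^ ((pk - 4) / 2) * s ^ 2 + (b + r) ^ ((pk - 2) / 2) * X ≤
      (|pk - 2| + 1) * ((b + r) ^ ((pk - 2) / 2) * X) := by
  have ht : 0 < b + r := by linarith
  have key : (b + r) ^ ((pk - 2) / 2) = (b + r) ^ ((pk - 4) / 2) * (b + r) := by
    rw [← Real.rpow_add_one ht.ne']; ring_nf
  have tp4 : 0 ≤ (b + r) ^ ((pk - 4) / 2) := Real.rpow_nonneg ht.le _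
  have inner : (pk - 2) * s ^ 2 + (b + r) * X ≤ (|pk - 2| + 1) * ((b + r) * X) := by
    have h1 : (pk - 2) * s ^ 2 ≤ |pk - 2| * s ^ 2 := by
      nlinarith [le_abs_self (pk - 2), sq_nonneg s]
    have h2 : |pk - 2| * s ^ 2 ≤ |pk - 2| * ((b + r) * X) :=
      mul_le_mul_of_nonneg_left (by nlinarith) (abs_nonneg (pk - 2))
    linarith
  calc (pk - 2) * (b + r) ^ ((pk - 4) / 2) * s ^ 2 + (b + r) ^ ((pk - 2) / 2) * X
      = (b + r) ^ ((pk - 4) / 2) * ((pk - 2) * s ^ 2 + (b + r) * X) := by rw [key]; ring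
    _ ≤ (b + r) ^ ((pk - 4) / 2) * ((|pk - 2| + 1) * ((b + r) * X)) :=
        mul_le_mul_of_nonneg_left inner tp4
    _ = (|pk - 2| + 1) * ((b + r) ^ ((pk - 2) / 2) * X) := by rw [key]; ring
open Real

-- lower tail: μ^{p0/2} ≤ (1+N) t^{(p0-2)/2}
lemma tail_low (p0 b μ N : ℝ) (hp : 1 ≤ p0) (hμ0 : 0 < μ) (hμ1 : μ < 1)
    (hbl : μ ≤ b) (hbu : b ≤ 1 / μ) (hN : 0 ≤ N) :
    μ ^ (p0 / 2) ≤ (1 + N) * (b + N ^ 2) ^ ((p0 - 2) / 2) := by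
  have ht : 0 < b + N ^ 2 := by nlinarith
  rcases le_total 2 p0 with h2 | h2
  · have h1 : μ ^ (p0 / 2) ≤ μ ^ ((p0 - 2) / 2) :=
      Real.rpow_le_rpow_of_exponent_ge hμ0 hμ1.le (by linarith)
    have h2' : μ ^ ((p0 - 2) / 2) ≤ (b + N ^ 2) ^ ((p0 - 2) / 2) :=
      Real.rpow_le_rpow hμ0.le (by nlinarith) (by linarith)
    have h3 : 1 * (b + N ^ 2) ^ ((p0 - 2) / 2) ≤ (1 + N) * (b + N ^ 2) ^ ((p0 - 2) / 2) :=
      mul_le_mul_of_nonneg_right (by linarith) (Real.rpow_nonneg ht.le _)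
    linarith
  · set e := (2 - p0) / 2 with he
    have he0 : 0 ≤ e := by rw [he]; linarith
    have h1 : μ ^ (p0 / 2) ≤ μ ^ e :=
      Real.rpow_le_rpow_of_exponent_ge hμ0 hμ1.le (by rw [he]; linarith)
    have hneg : (b + N ^ 2) ^ ((p0 - 2) / 2) = ((b + N ^ 2) ^ e)⁻¹ := by
      rw [← Real.rpow_neg ht.le]; congr 1; rw [he]; ring
    have hte : 0 < (b + N ^ 2) ^ e := Real.rpow_pos_of_pos ht _
    rw [hneg, ← div_eq_mul_inv, le_div_iff₀ hte]
    have hmul : μ ^ e * (b + N ^ 2) ^ e = (μ * (b + N ^ 2)) ^ e :=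
      (Real.mul_rpow hμ0.le ht.le).symm
    have hb1 : b * μ ≤ 1 := (le_div_iff₀ hμ0).mp hbu
    have hub : μ * (b + N ^ 2) ≤ (1 + N) ^ 2 := by
      nlinarith [mul_nonneg (sub_nonneg.mpr hμ1.le) (sq_nonneg N), hN, sq_nonneg N]
    have h4 : (μ * (b + N ^ 2)) ^ e ≤ ((1 + N) ^ 2) ^ e :=
      Real.rpow_le_rpow (by positivity) hub he0
    have h5 : ((1 + N) ^ 2) ^ e = (1 + N) ^ (2 * e) := by
      rw [← Real.rpow_natCast (1 + N) 2, ← Real.rpow_mul (by linarith)]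
      norm_num
    have h6 : (1 + N) ^ (2 * e) ≤ (1 + N) ^ (1 : ℝ) :=
      Real.rpow_le_rpow_of_exponent_le (by linarith) (by rw [he]; linarith)
    calc μ ^ (p0 / 2) * (b + N ^ 2) ^ e ≤ μ ^ e * (b + N ^ 2) ^ e :=
          mul_le_mul_of_nonneg_right h1 hte.le
      _ = (μ * (b + N ^ 2)) ^ e := hmul
      _ ≤ (1 + N) ^ (2 * e) := by rw [← h5]; exact h4
      _ ≤ (1 + N) ^ (1 : ℝ) := h6
      _ = 1 + N := Real.rpow_one _

-- upper tail: t^{(pk-2)/2} * (1+N) ≤ √(2/μ) * (1/μ+M²)^{(pk-1)/2}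
lemma tail_up (pk b μ N M : ℝ) (hp : 1 ≤ pk) (hμ0 : 0 < μ) (hμ1 : μ < 1)
    (hbl : μ ≤ b) (hbu : b ≤ 1 / μ) (hN : 0 ≤ N) (hNM : N ≤ M) (hM : 1 ≤ M) :
    (b + N ^ 2) ^ ((pk - 2) / 2) * (1 + N) ≤
      Real.sqrt (2 / μ) * (1 / μ + M ^ 2) ^ ((pk - 1) / 2) := by
  have ht : 0 < b + N ^ 2 := by nlinarith
  have hsq : (1 + N) ^ 2 ≤ 2 / μ * (b + N ^ 2) := by
    rw [div_mul_eq_mul_div, le_div_iff₀ hμ0]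
    nlinarith [sq_nonneg (1 - N), sq_nonneg N]
  have h1 : 1 + N ≤ Real.sqrt (2 / μ) * Real.sqrt (b + N ^ 2) := by
    rw [← Real.sqrt_mul (by positivity)]
    exact (Real.le_sqrt (by linarith) (by positivity)).mpr hsq
  have h2 : (b + N ^ 2) ^ ((pk - 2) / 2) * Real.sqrt (b + N ^ 2) =
      (b + N ^ 2) ^ ((pk - 1) / 2) := by
    rw [Real.sqrt_eq_rpow, ← Real.rpow_add ht]; congr 1; ring
  have h3 : (b + N ^ 2) ^ ((pk - 1) / 2) ≤ (1 / μ + M ^ 2) ^ ((pk - 1) / 2) :=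
    Real.rpow_le_rpow ht.le (by nlinarith) (by linarith)
  have tp : 0 ≤ (b + N ^ 2) ^ ((pk - 2) / 2) := Real.rpow_nonneg ht.le _
  calc (b + N ^ 2) ^ ((pk - 2) / 2) * (1 + N)
      ≤ (b + N ^ 2) ^ ((pk - 2) / 2) * (Real.sqrt (2 / μ) * Real.sqrt (b + N ^ 2)) :=
        mul_le_mul_of_nonneg_left h1 tp
    _ = Real.sqrt (2 / μ) * ((b + N ^ 2) ^ ((pk - 2) / 2) * Real.sqrt (b + N ^ 2)) := by ring
    _ = Real.sqrt (2 / μ) * (b + N ^ 2) ^ ((pk - 1) / 2) := by rw [h2]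
    _ ≤ Real.sqrt (2 / μ) * (1 / μ + M ^ 2) ^ ((pk - 1) / 2) :=
        mul_le_mul_of_nonneg_left h3 (Real.sqrt_nonneg _)
open Real RealInnerProductSpace

lemma quad_id (n : ℕ) (A2 B : ℝ) (σ ξ : EuclideanSpace ℝ (Fin n)) :
    (∑ i : Fin n, ∑ j : Fin n,
      (A2 * σ i * σ j + B * (if i = j then 1 else 0)) * ξ i * ξ j) =
      A2 * (∑ i : Fin n, ξ i * σ i) ^ 2 + B * ∑ i : Fin n, ξ i ^ 2 := by
  have h1 : ∀ i : Fin n, (∑ j : Fin n,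
      (A2 * σ i * σ j + B * (if i = j then 1 else 0)) * ξ i * ξ j)
      = A2 * σ i * ξ i * ∑ j : Fin n, ξ j * σ j + B * ξ i ^ 2 := by
    intro i
    have h2 : ∀ j : Fin n, (A2 * σ i * σ j + B * (if i = j then 1 else 0)) * ξ i * ξ j
        = A2 * σ i * ξ i * (ξ j * σ j) + (if i = j then B * ξ i * ξ j else 0) := by
      intro j; split_ifs with h <;> ring
    rw [Finset.sum_congr rfl fun j _ => h2 j, Finset.sum_add_distrib, ← Finset.mul_sum,
      Finset.sum_ite_eq, if_pos (Finset.mem_univ i)]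
    ring
  have h3 : (∑ i : Fin n, A2 * σ i * ξ i) = A2 * ∑ i : Fin n, ξ i * σ i := by
    rw [Finset.mul_sum]; exact Finset.sum_congr rfl fun i _ => by ring
  rw [Finset.sum_congr rfl fun i _ => h1 i, Finset.sum_add_distrib, ← Finset.mul_sum,
    ← Finset.sum_mul, h3]
  ring

lemma norm_sq_sum (n : ℕ) (ξ : EuclideanSpace ℝ (Fin n)) : ‖ξ‖ ^ 2 = ∑ i : Fin n, ξ i ^ 2 := by
  rw [EuclideanSpace.norm_eq, Real.sq_sqrt (by positivity)]
  simp [sq_abs]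

lemma cs (n : ℕ) (σ ξ : EuclideanSpace ℝ (Fin n)) :
    (∑ i : Fin n, ξ i * σ i) ^ 2 ≤ ‖σ‖ ^ 2 * (∑ i : Fin n, ξ i ^ 2) := by
  have h := abs_real_inner_le_norm ξ σ
  have hi : ⟪ξ, σ⟫ = ∑ i : Fin n, ξ i * σ i := by
    simp [PiLp.inner_apply, RCLike.inner_apply, mul_comm]
  calc (∑ i : Fin n, ξ i * σ i) ^ 2 = |⟪ξ, σ⟫| ^ 2 := by rw [hi, sq_abs]
    _ ≤ (‖ξ‖ * ‖σ‖) ^ 2 := by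
        apply sq_le_sq' <;> nlinarith [abs_nonneg (⟪ξ, σ⟫), norm_nonneg ξ, norm_nonneg σ]
    _ = ‖σ‖ ^ 2 * (∑ i : Fin n, ξ i ^ 2) := by rw [← norm_sq_sum]; ring

theorem stmt_5 (n m : ℕ) (hm : 1 ≤ m) (p b c : ℕ → ℝ)
    (hp1 : 1 ≤ p 0) (hpmono : ∀ i j, i ≤ j → j < m → p i ≤ p j)
    (hc : ∀ k < m, 0 < c k)
    (μ : ℝ) (hμ : μ ∈ Set.Ioo (0 : ℝ) 1)
    (hbk : ∀ k < m, μ ≤ b k ∧ b k ≤ 1 / μ)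
    (M : ℝ) (hM : 1 ≤ M)
    (σ : EuclideanSpace ℝ (Fin n)) (hσ : σ ≠ 0) (hσM : ‖σ‖ ≤ M)
    (ξ : EuclideanSpace ℝ (Fin n)) (ξn1 : ℝ)
    (hξ : (∑ i : Fin n, ξ i * σ i) = ξn1) :
    c 0 * min 1 (p 0 - 1) * μ ^ (p 0 / 2) / (1 + M ^ 2) *
        (1 + ‖σ‖)⁻¹ * (‖ξ‖ ^ 2 + ξn1 ^ 2) ≤
      (∑ i : Fin n, ∑ j : Fin n,
        (2 * (∑ k ∈ Finset.range m,
            c k * (p k - 2) / 2 * (b k + ‖σ‖ ^ 2) ^ ((p k - 4) / 2)) * σ i * σ j +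
          (∑ k ∈ Finset.range m, c k * (b k + ‖σ‖ ^ 2) ^ ((p k - 2) / 2)) *
            (if i = j then 1 else 0)) * ξ i * ξ j) ∧
    (∑ i : Fin n, ∑ j : Fin n,
        (2 * (∑ k ∈ Finset.range m,
            c k * (p k - 2) / 2 * (b k + ‖σ‖ ^ 2) ^ ((p k - 4) / 2)) * σ i * σ j +
          (∑ k ∈ Finset.range m, c k * (b k + ‖σ‖ ^ 2) ^ ((p k - 2) / 2)) *
            (if i = j then 1 else 0)) * ξ i * ξ j) ≤
      (Real.sqrt (2 / μ) *
        ∑ k ∈ Finset.range m, c k * (|p k - 2| + 1) * (1 / μ + M ^ 2) ^ ((p k - 1) / 2)) *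
        (1 + ‖σ‖)⁻¹ * (‖ξ‖ ^ 2 + ξn1 ^ 2) := by
  obtain ⟨hμ0, hμ1⟩ := hμ
  set N := ‖σ‖ with hNdef
  have hN0 : (0 : ℝ) ≤ N := norm_nonneg σ
  have hX0 : (0 : ℝ) ≤ ‖ξ‖ ^ 2 := sq_nonneg _
  have hXeq : ‖ξ‖ ^ 2 = ∑ i : Fin n, ξ i ^ 2 := norm_sq_sum n ξ
  have hs2 : ξn1 ^ 2 ≤ N ^ 2 * ‖ξ‖ ^ 2 := by
    rw [← hξ, hXeq]; exact cs n σ ξ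
  have hpk : ∀ k < m, 1 ≤ p k := fun k hk => le_trans hp1 (hpmono 0 k (Nat.zero_le k) hk)
  have hbpos : ∀ k < m, 0 < b k := fun k hk => lt_of_lt_of_le hμ0 (hbk k hk).1
  have h1N : (0 : ℝ) < 1 + N := by linarith
  -- rewrite the quadratic form
  have hQ := quad_id n
    (2 * (∑ k ∈ Finset.range m, c k * (p k - 2) / 2 * (b k + N ^ 2) ^ ((p k - 4) / 2)))
    (∑ k ∈ Finset.range m, c k * (b k + N ^ 2) ^ ((p k - 2) / 2)) σ ξ
  rw [hξ, ← hXeq] at hQ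
  have hsum : 2 * (∑ k ∈ Finset.range m,
        c k * (p k - 2) / 2 * (b k + N ^ 2) ^ ((p k - 4) / 2)) * ξn1 ^ 2 +
      (∑ k ∈ Finset.range m, c k * (b k + N ^ 2) ^ ((p k - 2) / 2)) * ‖ξ‖ ^ 2 =
      ∑ k ∈ Finset.range m, c k * ((p k - 2) * (b k + N ^ 2) ^ ((p k - 4) / 2) * ξn1 ^ 2 +
        (b k + N ^ 2) ^ ((p k - 2) / 2) * ‖ξ‖ ^ 2) := by
    rw [Finset.mul_sum, Finset.sum_mul, Finset.sum_mul, ← Finset.sum_add_distrib]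
    exact Finset.sum_congr rfl fun k _ => by ring
  rw [hQ, hsum]
  constructor
  · -- lower bound
    have hL : ∀ k ∈ Finset.range m,
        c k * (min 1 (p k - 1) * ((b k + N ^ 2) ^ ((p k - 2) / 2) * ‖ξ‖ ^ 2)) ≤
        c k * ((p k - 2) * (b k + N ^ 2) ^ ((p k - 4) / 2) * ξn1 ^ 2 +
          (b k + N ^ 2) ^ ((p k - 2) / 2) * ‖ξ‖ ^ 2) := by
      intro k hk
      have hk' := Finset.mem_range.mp hk
      exact mul_le_mul_of_nonneg_left
        (term_low (p k) (b k) (N ^ 2) ξn1 (‖ξ‖ ^ 2) (hpk k hk') (hbpos k hk')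
          (sq_nonneg N) hX0 hs2) (hc k hk').le
    have hLnn : ∀ k ∈ Finset.range m, (0 : ℝ) ≤
        c k * (min 1 (p k - 1) * ((b k + N ^ 2) ^ ((p k - 2) / 2) * ‖ξ‖ ^ 2)) := by
      intro k hk
      have hk' := Finset.mem_range.mp hk
      have hmn : (0:ℝ) ≤ min 1 (p k - 1) := le_min (by norm_num) (by linarith [hpk k hk'])
      have hrp := Real.rpow_nonneg (by nlinarith [hbpos k hk', sq_nonneg N] :
        (0:ℝ) ≤ b k + N ^ 2) ((p k - 2) / 2)
      exact mul_nonneg (hc k hk').le (mul_nonneg hmn (mul_nonneg hrp hX0))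
    have hsingle : c 0 * (min 1 (p 0 - 1) * ((b 0 + N ^ 2) ^ ((p 0 - 2) / 2) * ‖ξ‖ ^ 2)) ≤
        ∑ k ∈ Finset.range m,
          c k * (min 1 (p k - 1) * ((b k + N ^ 2) ^ ((p k - 2) / 2) * ‖ξ‖ ^ 2)) :=
      Finset.single_le_sum hLnn (Finset.mem_range.mpr hm)
    have hhead : c 0 * min 1 (p 0 - 1) * μ ^ (p 0 / 2) / (1 + M ^ 2) * (1 + N)⁻¹ *
        (‖ξ‖ ^ 2 + ξn1 ^ 2) ≤
        c 0 * (min 1 (p 0 - 1) * ((b 0 + N ^ 2) ^ ((p 0 - 2) / 2) * ‖ξ‖ ^ 2)) := by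
      have hc0 := hc 0 hm
      have hmn0 : (0:ℝ) ≤ min 1 (p 0 - 1) := le_min (by norm_num) (by linarith)
      have hNM2 : N ^ 2 * ‖ξ‖ ^ 2 ≤ M ^ 2 * ‖ξ‖ ^ 2 :=
        mul_le_mul_of_nonneg_right (by nlinarith) hX0
      have hXs : ‖ξ‖ ^ 2 + ξn1 ^ 2 ≤ (1 + M ^ 2) * ‖ξ‖ ^ 2 := by linarith
      have h1M : (0:ℝ) < 1 + M ^ 2 := by positivity
      have hcoef : (0:ℝ) ≤ c 0 * min 1 (p 0 - 1) * μ ^ (p 0 / 2) / (1 + M ^ 2) * (1 + N)⁻¹ :=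
        mul_nonneg (div_nonneg (mul_nonneg (mul_nonneg hc0.le hmn0)
          (Real.rpow_nonneg hμ0.le _)) h1M.le) (inv_nonneg.mpr h1N.le)
      have htail : μ ^ (p 0 / 2) * (1 + N)⁻¹ ≤ (b 0 + N ^ 2) ^ ((p 0 - 2) / 2) := by
        rw [mul_inv_le_iff₀ h1N, mul_comm ((b 0 + N ^ 2) ^ ((p 0 - 2) / 2)) (1 + N)]
        exact tail_low (p 0) (b 0) μ N hp1 hμ0 hμ1 (hbk 0 hm).1 (hbk 0 hm).2 hN0
      have h1M : (0:ℝ) < 1 + M ^ 2 := by positivity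
      calc c 0 * min 1 (p 0 - 1) * μ ^ (p 0 / 2) / (1 + M ^ 2) * (1 + N)⁻¹ *
            (‖ξ‖ ^ 2 + ξn1 ^ 2)
          ≤ c 0 * min 1 (p 0 - 1) * μ ^ (p 0 / 2) / (1 + M ^ 2) * (1 + N)⁻¹ *
            ((1 + M ^ 2) * ‖ξ‖ ^ 2) := mul_le_mul_of_nonneg_left hXs hcoef
        _ = c 0 * min 1 (p 0 - 1) * (μ ^ (p 0 / 2) * (1 + N)⁻¹) * ‖ξ‖ ^ 2 := by
            field_simp
        _ ≤ c 0 * min 1 (p 0 - 1) * (b 0 + N ^ 2) ^ ((p 0 - 2) / 2) * ‖ξ‖ ^ 2 :=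
            mul_le_mul_of_nonneg_right
              (mul_le_mul_of_nonneg_left htail (by positivity)) hX0
        _ = c 0 * (min 1 (p 0 - 1) * ((b 0 + N ^ 2) ^ ((p 0 - 2) / 2) * ‖ξ‖ ^ 2)) := by ring
    exact le_trans hhead (le_trans hsingle (Finset.sum_le_sum hL))
  · -- upper bound
    have hRHS : (Real.sqrt (2 / μ) *
        ∑ k ∈ Finset.range m, c k * (|p k - 2| + 1) * (1 / μ + M ^ 2) ^ ((p k - 1) / 2)) *
        (1 + N)⁻¹ * (‖ξ‖ ^ 2 + ξn1 ^ 2) =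
        ∑ k ∈ Finset.range m, c k * ((|p k - 2| + 1) *
          (Real.sqrt (2 / μ) * (1 / μ + M ^ 2) ^ ((p k - 1) / 2) * (1 + N)⁻¹ *
            (‖ξ‖ ^ 2 + ξn1 ^ 2))) := by
      rw [Finset.mul_sum, Finset.sum_mul, Finset.sum_mul]
      exact Finset.sum_congr rfl fun k _ => by ring
    rw [hRHS]
    apply Finset.sum_le_sum
    intro k hk
    have hk' := Finset.mem_range.mp hk
    apply mul_le_mul_of_nonneg_left _ (hc k hk').le
    have habs : (0:ℝ) ≤ |p k - 2| + 1 := by positivity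
    apply le_trans (term_up (p k) (b k) (N ^ 2) ξn1 (‖ξ‖ ^ 2) (hbpos k hk')
      (sq_nonneg N) hX0 hs2)
    apply mul_le_mul_of_nonneg_left _ habs
    -- t^{(pk-2)/2} * X ≤ √(2/μ)*(1/μ+M²)^{(pk-1)/2} * (1+N)⁻¹ * (X + s²)
    have htp : (0:ℝ) ≤ (b k + N ^ 2) ^ ((p k - 2) / 2) :=
      Real.rpow_nonneg (by nlinarith [hbpos k hk', sq_nonneg N]) _
    have hR0 : (0:ℝ) ≤ Real.sqrt (2 / μ) * (1 / μ + M ^ 2) ^ ((p k - 1) / 2) := by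
      have := Real.rpow_nonneg (by positivity : (0:ℝ) ≤ 1 / μ + M ^ 2) ((p k - 1) / 2)
      positivity
    have ht1 : (b k + N ^ 2) ^ ((p k - 2) / 2) ≤
        Real.sqrt (2 / μ) * (1 / μ + M ^ 2) ^ ((p k - 1) / 2) * (1 + N)⁻¹ := by
      rw [← div_eq_mul_inv, le_div_iff₀ h1N]
      exact tail_up (p k) (b k) μ N M (hpk k hk') hμ0 hμ1 (hbk k hk').1 (hbk k hk').2
        hN0 hσM hM
    calc (b k + N ^ 2) ^ ((p k - 2) / 2) * ‖ξ‖ ^ 2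
        ≤ (Real.sqrt (2 / μ) * (1 / μ + M ^ 2) ^ ((p k - 1) / 2) * (1 + N)⁻¹) *
          (‖ξ‖ ^ 2 + ξn1 ^ 2) := by
          apply mul_le_mul ht1 (by nlinarith [sq_nonneg ξn1]) hX0
          positivity
      _ = Real.sqrt (2 / μ) * (1 / μ + M ^ 2) ^ ((p k - 1) / 2) * (1 + N)⁻¹ *
          (‖ξ‖ ^ 2 + ξn1 ^ 2) := by ring
end
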